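/- arXiv:2008.08856 — 4 statements merged into one kernel-verified Lean document; each statement's English description precedes it below -/
import Mathlib

section
/- Let n ≥ 4 be an even integer and let k be a positive integer with k < n/2. Then the double generalized Petersen graph DP(n,k) is isomorphic to DP(n, n/2 − k). -/
open SimpleGraph

/-- The double generalized Petersen graph `DP(n,k)`; vertex `(t, i)` is
`u i, w i, x i, y i` according to `t = 0, 1, 2, 3`. -/
def DPGraph (n k : ℕ) : SimpleGraph (Fin 4 × ZMod n) :=
  SimpleGraph.fromRel fun a b =>
    (a.1 = 0 ∧ b.1 = 0 ∧ b.2 = a.2 + 1) ∨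
    (a.1 = 2 ∧ b.1 = 2 ∧ b.2 = a.2 + 1) ∨
    (a.1 = 1 ∧ b.1 = 3 ∧ b.2 = a.2 + (k : ZMod n)) ∨
    (a.1 = 3 ∧ b.1 = 1 ∧ b.2 = a.2 + (k : ZMod n)) ∨
    (a.1 = 0 ∧ b.1 = 1 ∧ b.2 = a.2) ∨
    (a.1 = 2 ∧ b.1 = 3 ∧ b.2 = a.2)

/-- For even `n ≥ 4` and `1 ≤ k < n/2`, the graph `DP(n,k)` is
isomorphic to `DP(n, n/2 - k)`. -/
theorem dp_iso_half_sub (n k : ℕ) (hn : 4 ≤ n) (heven : Even n)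
    (hk1 : 1 ≤ k) (hk : 2 * k < n) :
    Nonempty (DPGraph n k ≃g DPGraph n (n / 2 - k)) := by
  set m : ZMod n := ((n / 2 : ℕ) : ZMod n) with hm
  have hm2 : m + m = 0 := by
    rw [hm, ← Nat.cast_add]
    have h : n / 2 + n / 2 = n := by
      obtain ⟨r, hr⟩ := heven; omega
    rw [h, ZMod.natCast_self]
  have hk' : ((n / 2 - k : ℕ) : ZMod n) = m - (k : ZMod n) := by
    rw [Nat.cast_sub (by omega)]
  set s : Fin 4 → ZMod n := fun t => if t = 2 ∨ t = 3 then m else 0 with hsdef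
  have hs : ∀ t (i : ZMod n), (i + s t) + s t = i := by
    intro t i
    by_cases h : t = 2 ∨ t = 3 <;> simp [hsdef, h, add_assoc, hm2]
  refine ⟨{ toFun := fun p => (p.1, p.2 + s p.1),
            invFun := fun p => (p.1, p.2 + s p.1),
            left_inv := fun p => by simp [hs],
            right_inv := fun p => by simp [hs],
            map_rel_iff' := ?_ }⟩
  rintro ⟨ta, ia⟩ ⟨tb, ib⟩
  simp only [DPGraph, SimpleGraph.fromRel_adj, Equiv.coe_fn_mk, ne_eq, Prod.mk.injEq, hk']
  fin_cases ta <;> fin_cases tb <;>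
    simp [hsdef] <;>
    (try intro _) <;>
    constructor <;> rintro (h | h) <;>
      first
        | (left; linear_combination h)
        | (right; linear_combination h)
        | (left; linear_combination -h)
        | (right; linear_combination -h)
        | (left; linear_combination h + hm2)
        | (right; linear_combination h + hm2)
        | (left; linear_combination h - hm2)
        | (right; linear_combination h - hm2)
        | (left; linear_combination -h + hm2)
        | (right; linear_combination -h + hm2)
        | (left; linear_combination -h - hm2)
        | (right; linear_combination -h - hm2)
end

section
/- The folded cubes FQ_1 and FQ_2 are [1,0,4]-cycle regular, the folded cube FQ_4 is [1,9,4]-cycle regular, and for every n ≥ 3 with n ≠ 4 the folded cube FQ_n is [1,n−1,4]-cycle regular. -/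
/-!
A 4-cycle through an edge `ab` is the same as a pair `(u, v)` with `b ~ u ~ v ~ a` and `a, b, u, v`
distinct, so it suffices to count such pairs. In `FQ_n` two vertices are adjacent iff their
difference set (the coordinates where they differ) is a generator: a singleton or all `n - 1`
coordinates. With `E`, `P`, `Q` the difference sets of `ab`, `bu`, `av`, the pair `(u, v)` is a
4-cycle iff `P`, `Q` are generators other than `E` and `P ∆ E ∆ Q` is a generator. For `P = Q`
this always holds, giving `n - 1` cycles. Three distinct generators have a symmetric difference
of size `3` or `n - 3`, which is a generator only for `n = 4`; there all `3 · 3` pairs work.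
`FQ_1` and `FQ_2` have fewer than four vertices.
-/

open SimpleGraph

/-- A graph is `[l, lam, m]`-cycle regular if every path on `l+1` vertices
(i.e. of length `l`) belongs to exactly `lam` distinct cycles of length `m`,
cycles being counted as subgraphs. -/
def CycleRegular {V : Type*} (G : SimpleGraph V) (l lam m : ℕ) : Prop :=
  ∀ ⦃a b : V⦄ (p : G.Walk a b), p.IsPath → p.length = l →
    {H : G.Subgraph | (∃ (x : V) (c : G.Walk x x), c.IsCycle ∧ c.length = m ∧
      c.toSubgraph = H) ∧ p.toSubgraph ≤ H}.ncard = lam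

/-- The `n`-dimensional folded cube: vertices are `{0,1}^(n-1)`, two vertices
adjacent iff they differ in exactly one coordinate (hypercube edges) or in
all coordinates (diagonal edges). -/
def FQ (n : ℕ) : SimpleGraph (Fin (n - 1) → Bool) :=
  SimpleGraph.fromRel fun x y => (∃! i, x i ≠ y i) ∨ (∀ i, x i ≠ y i)

namespace SimpleGraph

variable {V : Type*} {G : SimpleGraph V} {a b u v x p q r : V}

/-- The other four distinctness conditions follow from irreflexivity of `G.Adj`. -/
def IsFourCycle (G : SimpleGraph V) (a b u v : V) : Prop :=
  G.Adj a b ∧ G.Adj b u ∧ G.Adj u v ∧ G.Adj v a ∧ a ≠ u ∧ b ≠ v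

theorem IsFourCycle.rotate (h : G.IsFourCycle a b u v) : G.IsFourCycle b u v a :=
  ⟨h.2.1, h.2.2.1, h.2.2.2.1, h.1, h.2.2.2.2.2, h.2.2.2.2.1.symm⟩

theorem IsFourCycle.reverse (h : G.IsFourCycle a b u v) : G.IsFourCycle b a v u :=
  ⟨h.1.symm, h.2.2.2.1.symm, h.2.2.1.symm, h.2.1.symm, h.2.2.2.2.2, h.2.2.2.2.1⟩

def fourCycleSubgraph (G : SimpleGraph V) (a b u v : V) : G.Subgraph where
  verts := {a, b, u, v}
  Adj x y := G.Adj x y ∧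
    (s(a, b) = s(x, y) ∨ s(b, u) = s(x, y) ∨ s(u, v) = s(x, y) ∨ s(v, a) = s(x, y))
  adj_sub h := h.1
  edge_vert := by
    rintro x y ⟨-, h | h | h | h⟩ <;> rw [eq_comm, Sym2.eq_iff] at h <;>
      rcases h with ⟨rfl, rfl⟩ | ⟨rfl, rfl⟩ <;> simp
  symm := ⟨fun x y h => ⟨h.1.symm, by simpa only [Sym2.eq_swap] using h.2⟩⟩

theorem fourCycleSubgraph_rotate : G.fourCycleSubgraph b u v a = G.fourCycleSubgraph a b u v := by
  ext
  · simp only [fourCycleSubgraph, Set.mem_insert_iff, Set.mem_singleton_iff]; tauto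
  · simp only [fourCycleSubgraph]; tauto

theorem fourCycleSubgraph_reverse : G.fourCycleSubgraph b a v u = G.fourCycleSubgraph a b u v := by
  ext
  · simp only [fourCycleSubgraph, Set.mem_insert_iff, Set.mem_singleton_iff]; tauto
  · simp only [fourCycleSubgraph, Sym2.eq_swap]
    tauto

def IsFourCycle.walk (h : G.IsFourCycle a b u v) : G.Walk a a :=
  .cons h.1 (.cons h.2.1 (.cons h.2.2.1 (.cons h.2.2.2.1 .nil)))

theorem IsFourCycle.walk_isCycle (h : G.IsFourCycle a b u v) : h.walk.IsCycle := by
  obtain ⟨hab, hbu, huv, hva, hau, hbv⟩ := h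
  simp [IsFourCycle.walk, Walk.cons_isCycle_iff, Walk.cons_isPath_iff, hab.ne, hbu.ne, huv.ne,
    hva.ne, hau, hbv, hab.ne.symm, hva.ne.symm, hau.symm]

theorem IsFourCycle.toSubgraph_walk (h : G.IsFourCycle a b u v) :
    h.walk.toSubgraph = G.fourCycleSubgraph a b u v := by
  ext x y
  · simp [IsFourCycle.walk, fourCycleSubgraph]; tauto
  · refine ⟨fun hxy => ⟨hxy.adj_sub, ?_⟩, fun hxy => ?_⟩
    · simpa [IsFourCycle.walk] using hxy
    · simpa [IsFourCycle.walk] using hxy.2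

theorem Walk.IsCycle.exists_isFourCycle {c : G.Walk x x} (hc : c.IsCycle) (hl : c.length = 4) :
    ∃ p q r, G.IsFourCycle x p q r ∧ c.toSubgraph = G.fourCycleSubgraph x p q r := by
  obtain _ | ⟨hxp, _ | ⟨hpq, _ | ⟨hqr, _ | ⟨hrx, _ | ⟨_, _⟩⟩⟩⟩⟩ := c <;> simp at hl
  rename_i p q r
  have hnodup := hc.support_nodup
  simp only [Walk.support_cons, Walk.support_nil, List.tail_cons, List.nodup_cons, List.mem_cons,
    List.not_mem_nil, or_false, not_or] at hnodup
  have h : G.IsFourCycle x p q r := ⟨hxp, hpq, hqr, hrx, Ne.symm hnodup.2.1.2, hnodup.1.2.1⟩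
  exact ⟨p, q, r, h, h.toSubgraph_walk⟩

theorem IsFourCycle.exists_eq_of_eq_first_edge (h : G.IsFourCycle x p q r)
    (he : s(a, b) = s(x, p)) :
    ∃ u v, G.IsFourCycle a b u v ∧ G.fourCycleSubgraph a b u v = G.fourCycleSubgraph x p q r := by
  rcases Sym2.eq_iff.mp he with ⟨rfl, rfl⟩ | ⟨rfl, rfl⟩
  · exact ⟨q, r, h, rfl⟩
  · exact ⟨r, q, h.reverse, fourCycleSubgraph_reverse⟩

theorem IsFourCycle.exists_eq_of_adj (h : G.IsFourCycle x p q r)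
    (hab : (G.fourCycleSubgraph x p q r).Adj a b) :
    ∃ u v, G.IsFourCycle a b u v ∧ G.fourCycleSubgraph a b u v = G.fourCycleSubgraph x p q r := by
  rcases hab.2 with he | he | he | he
  · exact h.exists_eq_of_eq_first_edge he.symm
  · simpa only [fourCycleSubgraph_rotate] using h.rotate.exists_eq_of_eq_first_edge he.symm
  · simpa only [fourCycleSubgraph_rotate] using h.rotate.rotate.exists_eq_of_eq_first_edge he.symm
  · simpa only [fourCycleSubgraph_rotate] using
      h.rotate.rotate.rotate.exists_eq_of_eq_first_edge he.symm

theorem fourCycleSubgraph_injOn :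
    Set.InjOn (fun w : V × V => G.fourCycleSubgraph a b w.1 w.2)
      {w | G.IsFourCycle a b w.1 w.2} := by
  rintro ⟨u, v⟩ ⟨hab, hbu, huv, hva, hau, hbv⟩ ⟨u', v'⟩ ⟨-, hbu', -, hv'a, hau', hbv'⟩ heq
  simp only at heq
  have hu' : (G.fourCycleSubgraph a b u v).Adj b u' := heq ▸ ⟨hbu', by simp⟩
  have hv' : (G.fourCycleSubgraph a b u v).Adj v' a := heq ▸ ⟨hv'a, by simp⟩
  have := hab.ne; have := hbu.ne; have := hva.ne
  simp only [fourCycleSubgraph, Sym2.eq_iff] at hu' hv'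
  simp only [Prod.mk.injEq]
  grind

theorem ncard_fourCycles_through_adj (hab : G.Adj a b) :
    {H : G.Subgraph | (∃ (x : V) (c : G.Walk x x), c.IsCycle ∧ c.length = 4 ∧ c.toSubgraph = H) ∧
      G.subgraphOfAdj hab ≤ H}.ncard = {w : V × V | G.IsFourCycle a b w.1 w.2}.ncard := by
  rw [← fourCycleSubgraph_injOn.ncard_image]
  congr 1
  ext H
  simp only [Set.mem_ofPred_eq, Set.mem_image, Prod.exists, subgraphOfAdj_le_iff]
  constructor
  · rintro ⟨⟨x, c, hc, hl, rfl⟩, hH⟩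
    obtain ⟨p, q, r, h, hcH⟩ := hc.exists_isFourCycle hl
    rw [hcH] at hH ⊢
    exact h.exists_eq_of_adj hH
  · rintro ⟨u, v, h, rfl⟩
    exact ⟨⟨a, h.walk, h.walk_isCycle, rfl, h.toSubgraph_walk⟩, hab, by simp⟩

theorem cycleRegular_one_four_of_ncard {lam : ℕ}
    (h : ∀ a b, G.Adj a b → {w : V × V | G.IsFourCycle a b w.1 w.2}.ncard = lam) :
    CycleRegular G 1 lam 4 := by
  rintro a b (_ | ⟨hab, _ | ⟨_, _⟩⟩) - hl <;> simp at hl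
  rw [Walk.toSubgraph_cons_nil_eq_subgraphOfAdj, ncard_fourCycles_through_adj, h a b hab]

theorem IsFourCycle.four_le_card [Fintype V] (h : G.IsFourCycle a b u v) :
    4 ≤ Fintype.card V := by
  obtain ⟨hab, hbu, huv, hva, hau, hbv⟩ := h
  have : [a, b, u, v].Nodup := by
    simp [hab.ne, hau, hva.ne.symm, hbu.ne, hbv, huv.ne]
  exact this.length_le_card

theorem cycleRegular_one_zero_four_of_card_lt_four [Fintype V] (hV : Fintype.card V < 4) :
    CycleRegular G 1 0 4 :=
  cycleRegular_one_four_of_ncard fun _ _ _ => by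
    rw [Set.ncard_eq_zero, Set.eq_empty_iff_forall_notMem]
    exact fun _ h => (h.four_le_card.trans_lt hV).false

end SimpleGraph

section FoldedCube

open Finset
open scoped symmDiff

variable {ι : Type*} [Fintype ι] {m : ℕ}

def diffSet (x y : ι → Bool) : Finset ι := {i | x i ≠ y i}

@[simp] theorem mem_diffSet {x y : ι → Bool} {i : ι} : i ∈ diffSet x y ↔ x i ≠ y i := by
  simp [diffSet]

theorem diffSet_comm (x y : ι → Bool) : diffSet x y = diffSet y x := by
  ext; simp [ne_comm]

theorem diffSet_symmDiff_diffSet [DecidableEq ι] (x y z : ι → Bool) :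
    diffSet x y ∆ diffSet y z = diffSet x z := by
  ext i; simp only [mem_symmDiff, mem_diffSet]; cases x i <;> cases y i <;> cases z i <;> simp

theorem diffSet_bijective [DecidableEq ι] (x : ι → Bool) : Function.Bijective (diffSet x) := by
  refine Function.bijective_iff_has_inverse.mpr ⟨fun P i => x i ^^ decide (i ∈ P), ?_, ?_⟩
  · intro y; funext i; simp only [mem_diffSet]; cases x i <;> cases y i <;> simp
  · intro P; ext i; simp only [mem_diffSet]; cases x i <;> by_cases i ∈ P <;> simp [*]

theorem card_compl_pair [DecidableEq ι] {p q : ι} (hpq : p ≠ q) :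
    #({p, q}ᶜ) = Fintype.card ι - 2 := by
  rw [card_compl, card_pair hpq]

def foldedCubeGens (m : ℕ) : Finset (Finset (Fin m)) :=
  univ.powersetCard 1 ∪ univ.powersetCard m

theorem mem_foldedCubeGens {s : Finset (Fin m)} : s ∈ foldedCubeGens m ↔ #s = 1 ∨ #s = m := by
  simp [foldedCubeGens]

theorem card_foldedCubeGens (hm : m ≠ 1) : #(foldedCubeGens m) = m + 1 := by
  rw [foldedCubeGens, card_union_of_disjoint (univ.pairwise_disjoint_powersetCard (by omega))]
  simp

theorem mem_foldedCubeGens_iff_eq {s : Finset (Fin m)} :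
    s ∈ foldedCubeGens m ↔ (∃ i, s = {i}) ∨ s = univ := by
  rw [mem_foldedCubeGens, card_eq_one, ← card_eq_iff_eq_univ, Fintype.card_fin]

theorem card_symmDiff_symmDiff_of_mem_foldedCubeGens {P E Q : Finset (Fin m)}
    (hP : P ∈ foldedCubeGens m) (hE : E ∈ foldedCubeGens m) (hQ : Q ∈ foldedCubeGens m)
    (hPE : P ≠ E) (hEQ : E ≠ Q) (hPQ : P ≠ Q) :
    #(P ∆ E ∆ Q) = 3 ∨ #(P ∆ E ∆ Q) = m - 2 := by
  rw [mem_foldedCubeGens_iff_eq] at hP hE hQ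
  rcases hP with ⟨p, rfl⟩ | rfl <;> rcases hE with ⟨e, rfl⟩ | rfl <;>
    rcases hQ with ⟨q, rfl⟩ | rfl <;>
    simp only [ne_eq, singleton_inj, not_true_eq_false] at hPE hEQ hPQ
  · left
    rw [show {p} ∆ {e} ∆ {q} = ({p, e, q} : Finset (Fin m)) by ext; simp [mem_symmDiff]; grind]
    exact card_eq_three.mpr ⟨p, e, q, hPE, hPQ, hEQ, rfl⟩
  all_goals right
  · rw [show {p} ∆ {e} ∆ univ = ({p, e} : Finset (Fin m))ᶜ by ext; simp [mem_symmDiff]; grind]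
    simpa using card_compl_pair hPE
  · rw [show {p} ∆ univ ∆ {q} = ({p, q} : Finset (Fin m))ᶜ by ext; simp [mem_symmDiff]; grind]
    simpa using card_compl_pair hPQ
  · rw [show univ ∆ {e} ∆ {q} = ({e, q} : Finset (Fin m))ᶜ by ext; simp [mem_symmDiff]; grind]
    simpa using card_compl_pair hEQ

theorem symmDiff_symmDiff_mem_foldedCubeGens_iff (hm : 2 ≤ m) {P E Q : Finset (Fin m)}
    (hP : P ∈ foldedCubeGens m) (hE : E ∈ foldedCubeGens m) (hQ : Q ∈ foldedCubeGens m)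
    (hPE : P ≠ E) (hEQ : E ≠ Q) (hPQ : P ≠ Q) :
    P ∆ E ∆ Q ∈ foldedCubeGens m ↔ m = 3 := by
  rw [mem_foldedCubeGens]
  rcases card_symmDiff_symmDiff_of_mem_foldedCubeGens hP hE hQ hPE hEQ hPQ with h | h <;>
    rw [h] <;> omega

def foldedCubeSquarePairs (m : ℕ) (E : Finset (Fin m)) :
    Set (Finset (Fin m) × Finset (Fin m)) :=
  {PQ | PQ.1 ∈ foldedCubeGens m ∧ PQ.1 ∆ E ∆ PQ.2 ∈ foldedCubeGens m ∧ PQ.2 ∈ foldedCubeGens m ∧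
    E ≠ PQ.1 ∧ E ≠ PQ.2}

theorem mem_foldedCubeSquarePairs_iff (hm : 2 ≤ m) {E : Finset (Fin m)}
    (hE : E ∈ foldedCubeGens m) {P Q : Finset (Fin m)} :
    (P, Q) ∈ foldedCubeSquarePairs m E ↔
      P ∈ (foldedCubeGens m).erase E ∧ Q ∈ (foldedCubeGens m).erase E ∧ (P = Q ∨ m = 3) := by
  simp only [foldedCubeSquarePairs, Set.mem_ofPred_eq, mem_erase]
  by_cases hPQ : P = Q
  · subst hPQ
    simp only [symmDiff_symmDiff_self', hE, true_or]
    tauto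
  · constructor
    · rintro ⟨hP, hPEQ, hQ, hEP, hEQ⟩
      exact ⟨⟨hEP.symm, hP⟩, ⟨hEQ.symm, hQ⟩, Or.inr
        ((symmDiff_symmDiff_mem_foldedCubeGens_iff hm hP hE hQ hEP.symm hEQ hPQ).mp hPEQ)⟩
    · rintro ⟨⟨hPE, hP⟩, ⟨hQE, hQ⟩, h3⟩
      refine ⟨hP, ?_, hQ, hPE.symm, hQE.symm⟩
      exact (symmDiff_symmDiff_mem_foldedCubeGens_iff hm hP hE hQ hPE hQE.symm hPQ).mpr
        (h3.resolve_left hPQ)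

theorem ncard_foldedCubeSquarePairs (hm : 2 ≤ m) {E : Finset (Fin m)}
    (hE : E ∈ foldedCubeGens m) :
    (foldedCubeSquarePairs m E).ncard = if m = 3 then 9 else m := by
  set S := (foldedCubeGens m).erase E
  have hS : #S = m := by
    rw [card_erase_of_mem hE, card_foldedCubeGens (by omega), Nat.add_sub_cancel]
  split_ifs with h3
  · have : foldedCubeSquarePairs m E = ↑(S ×ˢ S) := by
      ext ⟨P, Q⟩
      rw [mem_foldedCubeSquarePairs_iff hm hE, mem_coe, mem_product]
      exact ⟨fun h => ⟨h.1, h.2.1⟩, fun h => ⟨h.1, h.2, Or.inr h3⟩⟩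
    rw [this, Set.ncard_coe_finset, card_product, hS, h3]
  · have : foldedCubeSquarePairs m E = ↑S.diag := by
      ext ⟨P, Q⟩
      rw [mem_foldedCubeSquarePairs_iff hm hE, mem_coe, mem_diag]
      exact ⟨fun h => ⟨h.1, h.2.2.resolve_right h3⟩,
        fun ⟨hP, (hPQ : P = Q)⟩ => ⟨hP, hPQ ▸ hP, Or.inl hPQ⟩⟩
    rw [this, Set.ncard_coe_finset, diag_card, hS]

theorem existsUnique_or_forall_ne_iff {x y : Fin m → Bool} :
    ((∃! i, x i ≠ y i) ∨ ∀ i, x i ≠ y i) ↔ diffSet x y ∈ foldedCubeGens m := by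
  have hall : #{i | x i ≠ y i} = m ↔ ∀ i, x i ≠ y i := by
    simpa using card_filter_eq_iff (s := univ) (p := fun i => x i ≠ y i)
  rw [Fintype.existsUnique_iff_card_one, mem_foldedCubeGens, diffSet, hall]

theorem fq_adj_iff {n : ℕ} (hn : 2 ≤ n) {x y : Fin (n - 1) → Bool} :
    (FQ n).Adj x y ↔ diffSet x y ∈ foldedCubeGens (n - 1) := by
  have hne : diffSet x y ∈ foldedCubeGens (n - 1) → x ≠ y := by
    rintro h rfl
    simp [diffSet, mem_foldedCubeGens] at h
    omega
  rw [FQ, fromRel_adj, existsUnique_or_forall_ne_iff, existsUnique_or_forall_ne_iff,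
    diffSet_comm y x, or_self]
  exact and_iff_right_of_imp hne

theorem fq_isFourCycle_iff {n : ℕ} (hn : 2 ≤ n) {a b u v : Fin (n - 1) → Bool}
    (hab : (FQ n).Adj a b) :
    (FQ n).IsFourCycle a b u v ↔
      (diffSet b u, diffSet a v) ∈ foldedCubeSquarePairs (n - 1) (diffSet a b) := by
  have huv : diffSet b u ∆ diffSet a b ∆ diffSet a v = diffSet u v := by
    rw [diffSet_comm b u, diffSet_comm a b, diffSet_symmDiff_diffSet, diffSet_symmDiff_diffSet]
  have hau : diffSet b a ≠ diffSet b u ↔ a ≠ u := (diffSet_bijective b).injective.ne_iff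
  have hbv : diffSet a b ≠ diffSet a v ↔ b ≠ v := (diffSet_bijective a).injective.ne_iff
  rw [diffSet_comm b a] at hau
  have hE := (fq_adj_iff hn).mp hab
  simp only [IsFourCycle, foldedCubeSquarePairs, Set.mem_ofPred_eq, fq_adj_iff hn, hE, true_and]
  rw [huv, diffSet_comm a v, hau, ← diffSet_comm a v, hbv]

theorem ncard_fq_fourCycles {n : ℕ} (hn : 3 ≤ n) {a b : Fin (n - 1) → Bool}
    (hab : (FQ n).Adj a b) :
    {w : _ × _ | (FQ n).IsFourCycle a b w.1 w.2}.ncard = if n = 4 then 9 else n - 1 := by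
  have hpre : {w : _ × _ | (FQ n).IsFourCycle a b w.1 w.2} =
      Prod.map (diffSet b) (diffSet a) ⁻¹' foldedCubeSquarePairs (n - 1) (diffSet a b) := by
    ext
    exact fq_isFourCycle_iff (by omega) hab
  have hbij := (diffSet_bijective b).prodMap (diffSet_bijective a)
  rw [hpre, Set.ncard_preimage_of_injective_subset_range hbij.injective
    (by simp [hbij.surjective.range_eq]),
    ncard_foldedCubeSquarePairs (by omega) ((fq_adj_iff (by omega)).mp hab)]
  simp only [show n - 1 = 3 ↔ n = 4 by omega]

end FoldedCube

/-- `FQ_1` and `FQ_2` are `[1,0,4]`-cycle regular, `FQ_4` is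
`[1,9,4]`-cycle regular, and for every `n ≥ 3` with `n ≠ 4`, `FQ_n` is
`[1,n-1,4]`-cycle regular. -/
theorem fq_four_cycle_regular :
    CycleRegular (FQ 1) 1 0 4 ∧
    CycleRegular (FQ 2) 1 0 4 ∧
    CycleRegular (FQ 4) 1 9 4 ∧
    ∀ n : ℕ, 3 ≤ n → n ≠ 4 → CycleRegular (FQ n) 1 (n - 1) 4 := by
  refine ⟨cycleRegular_one_zero_four_of_card_lt_four (by simp),
    cycleRegular_one_zero_four_of_card_lt_four (by simp),
    cycleRegular_one_four_of_ncard fun a b hab => ?_,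
    fun n hn hn4 => cycleRegular_one_four_of_ncard fun a b hab => ?_⟩
  · exact ncard_fq_fourCycles (by norm_num) hab
  · rw [ncard_fq_fourCycles hn hab, if_neg hn4]
end

section
/- Let n ≥ 2 and let C be an arbitrary cycle in the folded cube FQ_n. Then the n numbers of occurrences in C of the edge labels 1, 2, …, n−1, d all have the same parity, i.e. they are either all even or all odd. -/
open SimpleGraph

/-- An edge of the folded cube is diagonal if its endpoints differ in all
coordinates. -/
def IsDiagonalEdge {m : ℕ} (e : Sym2 (Fin m → Bool)) : Prop :=
  ∃ x y : Fin m → Bool, e = s(x, y) ∧ ∀ i, x i ≠ y i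

/-- An edge of the folded cube carries the hypercube label `i` if its
endpoints differ exactly in coordinate `i`. -/
def HasHyperLabel {m : ℕ} (i : Fin m) (e : Sym2 (Fin m → Bool)) : Prop :=
  ∃ x y : Fin m → Bool, e = s(x, y) ∧ x i ≠ y i ∧ ∀ j, j ≠ i → x j = y j

attribute [local instance] Classical.propDecidable

/-- An edge flips coordinate `i` if its endpoints differ at `i`. -/
def FlipsAt {m : ℕ} (i : Fin m) (e : Sym2 (Fin m → Bool)) : Prop :=
  ∃ x y : Fin m → Bool, e = s(x, y) ∧ x i ≠ y i

lemma flipsAt_mk {m : ℕ} (i : Fin m) (a b : Fin m → Bool) :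
    FlipsAt i s(a, b) ↔ a i ≠ b i := by
  constructor
  · rintro ⟨x, y, he, hxy⟩
    rw [Sym2.eq_iff] at he
    rcases he with ⟨rfl, rfl⟩ | ⟨rfl, rfl⟩
    · exact fun h => hxy h
    · exact fun h => hxy h.symm
  · exact fun h => ⟨a, b, rfl, h⟩

lemma hyper_mk {m : ℕ} (i : Fin m) (a b : Fin m → Bool) :
    HasHyperLabel i s(a, b) ↔ a i ≠ b i ∧ ∀ j, j ≠ i → a j = b j := by
  constructor
  · rintro ⟨x, y, he, hxy, hall⟩
    rw [Sym2.eq_iff] at he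
    rcases he with ⟨rfl, rfl⟩ | ⟨rfl, rfl⟩
    · exact ⟨hxy, hall⟩
    · exact ⟨fun h => hxy h.symm, fun j hj => (hall j hj).symm⟩
  · exact fun ⟨h1, h2⟩ => ⟨a, b, rfl, h1, h2⟩

lemma diag_mk {m : ℕ} (a b : Fin m → Bool) :
    IsDiagonalEdge s(a, b) ↔ ∀ j, a j ≠ b j := by
  constructor
  · rintro ⟨x, y, he, hall⟩
    rw [Sym2.eq_iff] at he
    rcases he with ⟨rfl, rfl⟩ | ⟨rfl, rfl⟩
    · exact hall
    · exact fun j h => hall j h.symm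
  · exact fun h => ⟨a, b, rfl, h⟩

/-- A closed walk flips each coordinate an even number of times. -/
lemma walk_flip_parity (n : ℕ) (i : Fin (n - 1)) {u v : Fin (n - 1) → Bool}
    (w : (FQ n).Walk u v) :
    Even (w.edges.countP fun e => decide (FlipsAt i e)) ↔ u i = v i := by
  induction w with
  | nil => simp
  | @cons a b v h p ih =>
    simp only [Walk.edges_cons, List.countP_cons]
    by_cases hab : a i = b i
    · have hd : (decide (FlipsAt i s(a, b))) = false := by
        simp [flipsAt_mk, hab]
      rw [hd]
      simpa [hab] using ih
    · have hd : (decide (FlipsAt i s(a, b))) = true := by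
        simp [flipsAt_mk, hab]
      rw [hd, if_pos rfl, Nat.even_add_one, ih]
      revert hab
      cases a i <;> cases b i <;> cases v i <;> simp

lemma countP_split {α : Type*} (p q r : α → Bool) (l : List α)
    (h : ∀ e ∈ l, (p e = true ↔ (q e = true ∨ r e = true)) ∧
      ¬(q e = true ∧ r e = true)) :
    l.countP p = l.countP q + l.countP r := by
  induction l with
  | nil => simp
  | cons a t ih =>
    simp only [List.countP_cons]
    have ha := h a (by simp)
    have ht := ih fun e he => h e (by simp [he])
    cases hq : q a <;> cases hr : r a <;>
      simp [hq, hr] at ha <;> simp [ha, ht] <;> omega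

/-- For every cycle `C` of the folded cube `FQ_n` (`n ≥ 2`), the
numbers of occurrences in `C` of the edge labels `1, …, n-1, d` all have the
same parity: they are either all even or all odd. -/
theorem fq_cycle_label_parity (n : ℕ) (hn : 2 ≤ n) (x : Fin (n - 1) → Bool)
    (c : (FQ n).Walk x x) (hc : c.IsCycle) :
    ((∀ i : Fin (n - 1),
        Even (c.edges.countP fun e => decide (HasHyperLabel i e))) ∧
      Even (c.edges.countP fun e => decide (IsDiagonalEdge e))) ∨
    ((∀ i : Fin (n - 1),
        Odd (c.edges.countP fun e => decide (HasHyperLabel i e))) ∧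
      Odd (c.edges.countP fun e => decide (IsDiagonalEdge e))) := by
  have key : ∀ i : Fin (n - 1),
      Even (c.edges.countP fun e => decide (HasHyperLabel i e)) ↔
      Even (c.edges.countP fun e => decide (IsDiagonalEdge e)) := by
    intro i
    rcases eq_or_lt_of_le hn with h2 | h3
    · -- n = 2, so m = 1 and the predicates coincide
      have hm : n - 1 = 1 := by omega
      have hpred : ∀ e : Sym2 (Fin (n - 1) → Bool),
          (decide (HasHyperLabel i e) : Bool) = decide (IsDiagonalEdge e) := by
        intro e
        induction e using Sym2.ind with
        | _ a b =>
          have : ∀ j : Fin (n - 1), j = i := by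
            intro j; apply Fin.ext; omega
          simp only [hyper_mk, diag_mk, decide_eq_decide]
          constructor
          · rintro ⟨h1, _⟩ j; rw [this j]; exact h1
          · intro h; exact ⟨h i, fun j hj => absurd (this j) hj⟩
      have hEq : (c.edges.countP fun e => decide (HasHyperLabel i e)) =
          c.edges.countP fun e => decide (IsDiagonalEdge e) := by
        apply List.countP_congr
        intro e _; simp [hpred e]
      rw [hEq]
    · -- n ≥ 3, so m ≥ 2
      have hm : 2 ≤ n - 1 := by omega
      have hsplit : (c.edges.countP fun e => decide (FlipsAt i e)) =
          (c.edges.countP fun e => decide (HasHyperLabel i e)) +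
          (c.edges.countP fun e => decide (IsDiagonalEdge e)) := by
        apply countP_split
        intro e he
        have hedge : e ∈ (FQ n).edgeSet := c.edges_subset_edgeSet he
        induction e using Sym2.ind with
        | _ a b =>
          rw [SimpleGraph.mem_edgeSet] at hedge
          have hadj : (∃! j, a j ≠ b j) ∨ (∀ j, a j ≠ b j) := by
            rcases hedge.2 with h | h
            · exact h
            · rcases h with ⟨j, hj, hu⟩ | h
              · exact Or.inl ⟨j, fun hh => hj hh.symm,
                  fun k hk => hu k fun hh => hk hh.symm⟩
              · exact Or.inr fun j hh => h j hh.symm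
          -- a witness index different from i
          obtain ⟨j, hji⟩ : ∃ j : Fin (n - 1), j ≠ i := by
            by_cases h0 : i.val = 0
            · exact ⟨⟨1, by omega⟩, fun h => by simp [Fin.ext_iff, h0] at h⟩
            · exact ⟨⟨0, by omega⟩, fun h => by
                rw [Fin.ext_iff] at h; simp at h; omega⟩
          simp only [decide_eq_true_eq, flipsAt_mk, hyper_mk, diag_mk]
          constructor
          · constructor
            · intro hf
              rcases hadj with ⟨k, hk, hu⟩ | hall
              · left
                have hik := hu i hf
                refine ⟨hf, fun l hl => ?_⟩
                by_contra hne
                exact hl ((hu l hne).trans hik.symm)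
              · right; exact hall
            · rintro (⟨h1, _⟩ | hall)
              · exact h1
              · exact hall i
          · rintro ⟨⟨_, hsame⟩, hall⟩
            exact hall j (hsame j hji)
      have heven : Even (c.edges.countP fun e => decide (FlipsAt i e)) :=
        (walk_flip_parity n i c).mpr rfl
      rw [hsplit, Nat.even_add] at heven
      exact heven
  by_cases hD : Even (c.edges.countP fun e => decide (IsDiagonalEdge e))
  · exact Or.inl ⟨fun i => (key i).mpr hD, hD⟩
  · refine Or.inr ⟨fun i => ?_, Nat.not_even_iff_odd.mp hD⟩
    exact Nat.not_even_iff_odd.mp fun h => hD ((key i).mp h)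
end

section
/- Let n ≥ 2 with n ≠ 4. Then every cycle of length 4 in the folded cube FQ_n contains either exactly 0 or exactly 2 diagonal edges. -/
open SimpleGraph

attribute [local instance] Classical.propDecidable

lemma FQaux_bool_ne_iff {a b : Bool} : a ≠ b ↔ (a ^^ b) = true := by
  cases a <;> cases b <;> simp

lemma FQaux_diag_iff {m : ℕ} (a b : Fin m → Bool) :
    IsDiagonalEdge s(a, b) ↔ ∀ i, a i ≠ b i := by
  constructor
  · rintro ⟨u, v, he, hd⟩
    rw [Sym2.eq_iff] at he
    rcases he with ⟨rfl, rfl⟩ | ⟨rfl, rfl⟩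
    · exact hd
    · exact fun i => (hd i).symm
  · intro h; exact ⟨a, b, rfl, h⟩

lemma FQaux_step_diag {m : ℕ} {a b : Fin m → Bool} (hD : IsDiagonalEdge s(a, b)) :
    ∀ t, (a t ^^ b t) = true := by
  intro t
  exact FQaux_bool_ne_iff.mp ((FQaux_diag_iff a b).mp hD t)

lemma FQaux_step_classify {n : ℕ} {a b : Fin (n - 1) → Bool} (h : (FQ n).Adj a b)
    (hD : ¬ IsDiagonalEdge s(a, b)) :
    ∃ i, (∀ t, (a t ^^ b t) = decide (t = i)) ∧ ∃ j, j ≠ i := by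
  rw [FQaux_diag_iff] at hD
  push_neg at hD
  obtain ⟨j0, hj0⟩ := hD
  rw [FQ, SimpleGraph.fromRel_adj] at h
  have huniq : ∃ i, a i ≠ b i ∧ ∀ t, a t ≠ b t → t = i := by
    rcases h.2 with (⟨i, hi, hu⟩ | hall) | (⟨i, hi, hu⟩ | hall)
    · exact ⟨i, hi, fun t ht => hu t ht⟩
    · exact absurd hj0 (hall j0)
    · exact ⟨i, Ne.symm hi, fun t ht => hu t (Ne.symm ht)⟩
    · exact absurd hj0.symm (hall j0)
  obtain ⟨i, hi, hu⟩ := huniq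
  refine ⟨i, fun t => ?_, j0, fun hji => hi (hji ▸ hj0)⟩
  by_cases ht : t = i
  · subst ht; simp [FQaux_bool_ne_iff.mp hi]
  · have hab : a t = b t := by
      by_contra hne; exact ht (hu t hne)
    simp [hab, ht]

lemma FQaux_three_units {m : ℕ} (hm : m ≠ 3) (i j k : Fin m)
    (hne : ∃ t : Fin m, t ≠ i)
    (hcond : ∀ t : Fin m, (decide (t = i) ^^ (decide (t = j) ^^ decide (t = k))) = true) :
    False := by
  by_cases hij : i = j
  · by_cases hik : i = k
    · obtain ⟨t, ht⟩ := hne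
      have := hcond t
      simp [ht, hij ▸ ht, hik ▸ ht] at this
    · have := hcond i
      simp [hij, hik] at this
      exact hik (hij.trans this)
  · have hik : ¬ i = k := by
      have := hcond i
      simpa [hij, Ne.symm] using this
    have hjk : ¬ j = k := by
      have := hcond j
      simp at this
      exact fun h => hij (this.mpr h).symm
    have hcover : ∀ t : Fin m, t = i ∨ t = j ∨ t = k := by
      intro t
      by_contra hcon
      push_neg at hcon
      have := hcond t
      simp [hcon.1, hcon.2.1, hcon.2.2] at this
    have h1 : (Finset.univ : Finset (Fin m)) ⊆ {i, j, k} := by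
      intro t _
      rcases hcover t with rfl | rfl | rfl <;> simp
    have h2 : ({i, j, k} : Finset (Fin m)).card = 3 := by
      rw [Finset.card_insert_of_notMem (by simp [hij, hik]),
        Finset.card_insert_of_notMem (by simp [hjk]), Finset.card_singleton]
    have h3 := Finset.card_le_card h1
    have h4 := Finset.card_le_card ({i, j, k} : Finset (Fin m)).subset_univ
    simp [h2] at h3 h4
    omega

lemma FQaux_xz1 : ∀ a b c : Bool, (true ^^ (a ^^ (b ^^ c))) = false → (a ^^ (b ^^ c)) = true := by decide
lemma FQaux_xz2 : ∀ a b c : Bool, (a ^^ (true ^^ (b ^^ c))) = false → (a ^^ (b ^^ c)) = true := by decide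
lemma FQaux_xz3 : ∀ a b c : Bool, (a ^^ (b ^^ (true ^^ c))) = false → (a ^^ (b ^^ c)) = true := by decide
lemma FQaux_xz4 : ∀ a b c : Bool, (a ^^ (b ^^ (c ^^ true))) = false → (a ^^ (b ^^ c)) = true := by decide
lemma FQaux_yz1 : ∀ a : Bool, (a ^^ (true ^^ (true ^^ true))) = false → a = true := by decide
lemma FQaux_yz2 : ∀ a : Bool, (true ^^ (a ^^ (true ^^ true))) = false → a = true := by decide
lemma FQaux_yz3 : ∀ a : Bool, (true ^^ (true ^^ (a ^^ true))) = false → a = true := by decide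
lemma FQaux_yz4 : ∀ a : Bool, (true ^^ (true ^^ (true ^^ a))) = false → a = true := by decide
lemma FQaux_bb : ∀ a b c : Bool, (a ^^ b) = true → (b ^^ c) = true → c = a := by decide

/-- For `n ≥ 2` with `n ≠ 4`, every cycle of length `4` in the
folded cube `FQ_n` contains exactly `0` or exactly `2` diagonal edges. -/
theorem fq_four_cycle_diagonal_count (n : ℕ) (hn : 2 ≤ n) (hn4 : n ≠ 4)
    (x : Fin (n - 1) → Bool) (c : (FQ n).Walk x x) (hc : c.IsCycle)
    (hlen : c.length = 4) :
    (c.edges.countP fun e => decide (IsDiagonalEdge e)) = 0 ∨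
    (c.edges.countP fun e => decide (IsDiagonalEdge e)) = 2 := by
  have hm : n - 1 ≠ 3 := by omega
  cases c with
  | nil => simp at hlen
  | cons h1 p =>
    rename_i v1
    cases p with
    | nil => simp at hlen
    | cons h2 p =>
      rename_i v2
      cases p with
      | nil => simp at hlen
      | cons h3 p =>
        rename_i v3
        cases p with
        | nil => simp at hlen
        | cons h4 p =>
          cases p with
          | cons h5 p => simp only [Walk.length_cons] at hlen; omega
          | nil =>
            have hnd := hc.support_nodup
            simp [Walk.support_cons] at hnd
            have h2x : v2 ≠ x := hnd.2.1.2
            have key : ∀ t, ((x t ^^ v1 t) ^^ ((v1 t ^^ v2 t) ^^ ((v2 t ^^ v3 t) ^^ (v3 t ^^ x t)))) = false := by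
              intro t; cases x t <;> cases v1 t <;> cases v2 t <;> cases v3 t <;> rfl
            by_cases hD1 : IsDiagonalEdge s(x, v1) <;>
            by_cases hD2 : IsDiagonalEdge s(v1, v2) <;>
            by_cases hD3 : IsDiagonalEdge s(v2, v3) <;>
            by_cases hD4 : IsDiagonalEdge s(v3, x)
            -- TTTT
            · exact absurd (funext fun t => FQaux_bb _ _ _ (FQaux_step_diag hD1 t)
                (FQaux_step_diag hD2 t)) h2x
            -- TTTF
            · exfalso
              obtain ⟨i, hu4, j4, hj4⟩ := FQaux_step_classify h4 hD4
              have hk := key j4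
              rw [FQaux_step_diag hD1 j4, FQaux_step_diag hD2 j4,
                FQaux_step_diag hD3 j4, hu4 j4] at hk
              exact hj4 (by simpa using FQaux_yz4 _ hk)
            -- TTFT
            · exfalso
              obtain ⟨i, hu3, j3, hj3⟩ := FQaux_step_classify h3 hD3
              have hk := key j3
              rw [FQaux_step_diag hD1 j3, FQaux_step_diag hD2 j3,
                FQaux_step_diag hD4 j3, hu3 j3] at hk
              exact hj3 (by simpa using FQaux_yz3 _ hk)
            -- TTFF
            · right; simp [List.countP_cons, hD1, hD2, hD3, hD4]
            -- TFTT
            · exfalso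
              obtain ⟨i, hu2, j2, hj2⟩ := FQaux_step_classify h2 hD2
              have hk := key j2
              rw [FQaux_step_diag hD1 j2, FQaux_step_diag hD3 j2,
                FQaux_step_diag hD4 j2, hu2 j2] at hk
              exact hj2 (by simpa using FQaux_yz2 _ hk)
            -- TFTF
            · right; simp [List.countP_cons, hD1, hD2, hD3, hD4]
            -- TFFT
            · right; simp [List.countP_cons, hD1, hD2, hD3, hD4]
            -- TFFF
            · exfalso
              obtain ⟨i, hu2, j2, hj2⟩ := FQaux_step_classify h2 hD2
              obtain ⟨j, hu3, -⟩ := FQaux_step_classify h3 hD3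
              obtain ⟨k, hu4, -⟩ := FQaux_step_classify h4 hD4
              refine FQaux_three_units hm i j k ⟨j2, hj2⟩ fun t => ?_
              have hk := key t
              rw [FQaux_step_diag hD1 t, hu2 t, hu3 t, hu4 t] at hk
              exact FQaux_xz1 _ _ _ hk
            -- FTTT
            · exfalso
              obtain ⟨i, hu1, j1, hj1⟩ := FQaux_step_classify h1 hD1
              have hk := key j1
              rw [FQaux_step_diag hD2 j1, FQaux_step_diag hD3 j1,
                FQaux_step_diag hD4 j1, hu1 j1] at hk
              exact hj1 (by simpa using FQaux_yz1 _ hk)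
            -- FTTF
            · right; simp [List.countP_cons, hD1, hD2, hD3, hD4]
            -- FTFT
            · right; simp [List.countP_cons, hD1, hD2, hD3, hD4]
            -- FTFF
            · exfalso
              obtain ⟨i, hu1, j1, hj1⟩ := FQaux_step_classify h1 hD1
              obtain ⟨j, hu3, -⟩ := FQaux_step_classify h3 hD3
              obtain ⟨k, hu4, -⟩ := FQaux_step_classify h4 hD4
              refine FQaux_three_units hm i j k ⟨j1, hj1⟩ fun t => ?_
              have hk := key t
              rw [hu1 t, FQaux_step_diag hD2 t, hu3 t, hu4 t] at hk
              exact FQaux_xz2 _ _ _ hk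
            -- FFTT
            · right; simp [List.countP_cons, hD1, hD2, hD3, hD4]
            -- FFTF
            · exfalso
              obtain ⟨i, hu1, j1, hj1⟩ := FQaux_step_classify h1 hD1
              obtain ⟨j, hu2, -⟩ := FQaux_step_classify h2 hD2
              obtain ⟨k, hu4, -⟩ := FQaux_step_classify h4 hD4
              refine FQaux_three_units hm i j k ⟨j1, hj1⟩ fun t => ?_
              have hk := key t
              rw [hu1 t, hu2 t, FQaux_step_diag hD3 t, hu4 t] at hk
              exact FQaux_xz3 _ _ _ hk
            -- FFFT
            · exfalso
              obtain ⟨i, hu1, j1, hj1⟩ := FQaux_step_classify h1 hD1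
              obtain ⟨j, hu2, -⟩ := FQaux_step_classify h2 hD2
              obtain ⟨k, hu3, -⟩ := FQaux_step_classify h3 hD3
              refine FQaux_three_units hm i j k ⟨j1, hj1⟩ fun t => ?_
              have hk := key t
              rw [hu1 t, hu2 t, hu3 t, FQaux_step_diag hD4 t] at hk
              exact FQaux_xz4 _ _ _ hk
            -- FFFF
            · left; simp [List.countP_cons, hD1, hD2, hD3, hD4]
end
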